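/- For all integers n ≥ 2 and q ≥ 1, binom(n+q−1, q) + binom(n+q−2, q−1) ≤ (2/(n−1)!) · (q + (n−1)/2)^{n−1}, where the right-hand side is a real number. -/
import Mathlib

open Finset

/-- Cast of ascFactorial as a real product. -/
lemma ascFactorial_cast_prod (a k : ℕ) :
    ((a.ascFactorial k : ℕ) : ℝ) = ∏ i ∈ Finset.range k, ((a : ℝ) + i) := by
  induction k with
  | zero => simp
  | succ k ih =>
    rw [Nat.ascFactorial_succ, Finset.prod_range_succ, ← ih]
    push_cast
    ring

/-- AM-GM style bound for a product of an arithmetic progression. -/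
lemma prod_range_le_pow (k : ℕ) (c : ℝ) (hc : 0 ≤ c) :
    ∏ i ∈ Finset.range k, (c + i) ≤ (c + ((k : ℝ) - 1) / 2) ^ k := by
  rcases Nat.eq_zero_or_pos k with rfl | hk
  · simp
  have hk1 : (1 : ℝ) ≤ (k : ℝ) := by exact_mod_cast hk
  set x : ℝ := c + ((k : ℝ) - 1) / 2 with hxdef
  have hx : 0 ≤ x := by rw [hxdef]; linarith
  have hP : 0 ≤ ∏ i ∈ Finset.range k, (c + i) :=
    Finset.prod_nonneg fun i _ => by positivity
  have key : (∏ i ∈ Finset.range k, (c + i)) ^ 2 ≤ (x ^ k) ^ 2 := by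
    have hrefl : (∏ i ∈ Finset.range k, (c + i)) =
        ∏ i ∈ Finset.range k, (c + ((k - 1 - i : ℕ) : ℝ)) :=
      (Finset.prod_range_reflect (fun i => c + (i : ℝ)) k).symm
    calc (∏ i ∈ Finset.range k, (c + i)) ^ 2
        = (∏ i ∈ Finset.range k, (c + i)) *
          ∏ i ∈ Finset.range k, (c + ((k - 1 - i : ℕ) : ℝ)) := by rw [← hrefl, sq]
      _ = ∏ i ∈ Finset.range k, ((c + i) * (c + ((k - 1 - i : ℕ) : ℝ))) := by
          rw [← Finset.prod_mul_distrib]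
      _ ≤ ∏ _i ∈ Finset.range k, x ^ 2 := by
          apply Finset.prod_le_prod
          · intro i _; positivity
          · intro i hi
            rw [Finset.mem_range] at hi
            have hcast : ((k - 1 - i : ℕ) : ℝ) = (k : ℝ) - 1 - i := by
              have : i ≤ k - 1 := by omega
              push_cast [Nat.cast_sub this, Nat.cast_sub (by omega : 1 ≤ k)]
              ring
            rw [hcast, hxdef]
            nlinarith [sq_nonneg ((i : ℝ) - ((k : ℝ) - 1 - i))]
      _ = (x ^ k) ^ 2 := by rw [Finset.prod_const, Finset.card_range, ← pow_mul, ← pow_mul,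
            Nat.mul_comm]
  exact (pow_le_pow_iff_left₀ hP (by positivity) (two_ne_zero)).mp key

/-- For integers `n ≥ 2` and `q ≥ 1`,
`C(n+q−1, q) + C(n+q−2, q−1) ≤ (2/(n−1)!) (q + (n−1)/2)^{n−1}`. -/
theorem choose_sum_le (n q : ℕ) (hn : 2 ≤ n) (hq : 1 ≤ q) :
    ((Nat.choose (n + q - 1) q + Nat.choose (n + q - 2) (q - 1) : ℕ) : ℝ) ≤
      2 / Nat.factorial (n - 1) * ((q : ℝ) + ((n : ℝ) - 1) / 2) ^ ((n : ℝ) - 1) := by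
  obtain ⟨K, rfl⟩ : ∃ K, n = K + 2 := ⟨n - 2, by omega⟩
  obtain ⟨r, rfl⟩ : ∃ r, q = r + 1 := ⟨q - 1, by omega⟩
  set M : ℕ := K + 1 with hM
  -- simplify indices
  have i1 : K + 2 + (r + 1) - 1 = M + r + 1 := by omega
  have i2 : K + 2 + (r + 1) - 2 = M + r := by omega
  have i3 : r + 1 - 1 = r := by omega
  have i4 : K + 2 - 1 = M := by omega
  rw [i1, i2, i3, i4]
  -- rewrite the real exponent as a natural power
  have hexp : ((K + 2 : ℕ) : ℝ) - 1 = ((M : ℕ) : ℝ) := by push_cast [hM]; ring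
  rw [hexp, Real.rpow_natCast]
  set x : ℝ := ((r : ℝ) + 1) + ((M : ℕ) : ℝ) / 2 with hxdef
  have hx0 : 0 ≤ x := by positivity
  -- choose symmetry + ascFactorial
  have e1 : (M + r + 1).choose (r + 1) = (M + r + 1).choose M := by
    rw [← Nat.choose_symm (by omega : M ≤ M + r + 1)]
    congr 1
    omega
  have e2 : (M + r).choose r = (M + r).choose M := by
    rw [← Nat.choose_symm (by omega : M ≤ M + r)]
    congr 1
    omega
  have h1 : (r + 2).ascFactorial M = (Nat.factorial M) * (M + r + 1).choose (r + 1) := by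
    rw [e1, show M + r + 1 = r + 1 + M from by omega]
    exact Nat.ascFactorial_eq_factorial_mul_choose (r + 1) M
  have h2 : (r + 1).ascFactorial M = (Nat.factorial M) * (M + r).choose r := by
    rw [e2, show M + r = r + M from by omega]
    exact Nat.ascFactorial_eq_factorial_mul_choose r M
  -- the real products
  set Q : ℝ := ∏ i ∈ Finset.range K, ((r : ℝ) + 2 + i) with hQdef
  have hQ0 : 0 ≤ Q := Finset.prod_nonneg fun i _ => by positivity
  have hA : (((r + 2 : ℕ).ascFactorial M : ℕ) : ℝ) = Q * ((r : ℝ) + 2 + K) := by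
    rw [ascFactorial_cast_prod, hM, Finset.prod_range_succ, hQdef]
    push_cast
    ring_nf
  have hB : (((r + 1 : ℕ).ascFactorial M : ℕ) : ℝ) = Q * ((r : ℝ) + 1) := by
    rw [ascFactorial_cast_prod, hM, Finset.prod_range_succ', hQdef]
    push_cast
    ring_nf
  -- key product bound
  have hQle : Q ≤ x ^ K := by
    have := prod_range_le_pow K ((r : ℝ) + 2) (by positivity)
    calc Q ≤ ((r : ℝ) + 2 + ((K : ℝ) - 1) / 2) ^ K := this
      _ = x ^ K := by
          congr 1
          rw [hxdef, hM]
          push_cast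
          ring
  -- put everything together
  rw [div_mul_eq_mul_div, le_div_iff₀ (by exact_mod_cast Nat.factorial_pos M)]
  have hsum : (((M + r + 1).choose (r + 1) + (M + r).choose M : ℕ) : ℝ) * ((Nat.factorial M) : ℝ)
      = Q * (2 * x) := by
    have hcast : (((M + r + 1).choose (r + 1) + (M + r).choose M : ℕ) : ℝ) * ((Nat.factorial M) : ℝ)
        = (((r + 2 : ℕ).ascFactorial M : ℕ) : ℝ) + (((r + 1 : ℕ).ascFactorial M : ℕ) : ℝ) := by
      rw [h1, h2, e2]
      push_cast
      ring
    rw [hcast, hA, hB, hxdef, hM]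
    push_cast
    ring
  rw [e2, hsum]
  calc Q * (2 * x) ≤ x ^ K * (2 * x) := by
        apply mul_le_mul_of_nonneg_right hQle
        positivity
    _ = 2 * x ^ M := by rw [hM, pow_succ]; ring
    _ = 2 * (((r + 1 : ℕ) : ℝ) + ((M : ℕ) : ℝ) / 2) ^ M := by rw [hxdef]; push_cast; ring
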